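/- arXiv:2404.05271 — 7 statements merged into one kernel-verified Lean document; each statement's English description precedes it below -/
import Mathlib

section
/- Let K = 2^m for some natural number m. If S is a finite multiset of natural numbers, each of which is a power of 2 and at most K, and |S| ≥ K, then there exists a sub-multiset S' of S whose sum is exactly K. -/
/-!
Induct on `m`. A multiset of divisors of `2 ^ (m + 1)` either contains `2 ^ (m + 1)` itself, or
consists of divisors of `2 ^ m`; in the latter case, extract a sub-multiset of sum `2 ^ m`, and
since the rest still has sum at least `2 ^ m`, extract a second one from it. When every element
is a power of two, `|S| ≤ ΣS`, so `|S| ≥ 2 ^ m` suffices.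
-/

lemma Nat.eq_two_pow_succ_or_dvd_two_pow {x m : ℕ} (hx : x ∣ 2 ^ (m + 1)) :
    x = 2 ^ (m + 1) ∨ x ∣ 2 ^ m := by
  obtain ⟨a, ha, rfl⟩ := (Nat.dvd_prime_pow Nat.prime_two).1 hx
  rcases ha.eq_or_lt with rfl | ha
  · exact .inl rfl
  · exact .inr (Nat.pow_dvd_pow 2 (Nat.lt_succ_iff.1 ha))

theorem Multiset.exists_le_sum_eq_two_pow (m : ℕ) (S : Multiset ℕ) (hdvd : ∀ x ∈ S, x ∣ 2 ^ m)
    (hsum : 2 ^ m ≤ S.sum) : ∃ T ≤ S, T.sum = 2 ^ m := by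
  induction m generalizing S with
  | zero =>
    have hS : S ≠ 0 := by rintro rfl; simp at hsum
    obtain ⟨x, hx⟩ := Multiset.exists_mem_of_ne_zero hS
    have hx1 : x = 1 := Nat.dvd_one.1 (hdvd x hx)
    exact ⟨{x}, Multiset.singleton_le.2 hx, by simp [hx1]⟩
  | succ m ih =>
    by_cases htop : 2 ^ (m + 1) ∈ S
    · exact ⟨{2 ^ (m + 1)}, Multiset.singleton_le.2 htop, Multiset.sum_singleton _⟩
    have hdvd' : ∀ x ∈ S, x ∣ 2 ^ m := fun x hx =>
      (Nat.eq_two_pow_succ_or_dvd_two_pow (hdvd x hx)).resolve_left (by rintro rfl; exact htop hx)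
    obtain ⟨T₁, hT₁, hT₁sum⟩ := ih S hdvd' (le_trans (Nat.pow_le_pow_right two_pos m.le_succ) hsum)
    have hsplit : S - T₁ + T₁ = S := tsub_add_cancel_of_le hT₁
    have hrest : 2 ^ m ≤ (S - T₁).sum := by
      have := congrArg Multiset.sum hsplit
      rw [Multiset.sum_add, hT₁sum] at this
      omega
    obtain ⟨T₂, hT₂, hT₂sum⟩ :=
      ih (S - T₁) (fun x hx => hdvd' x (Multiset.mem_of_le (Multiset.sub_le_self S T₁) hx)) hrest
    refine ⟨T₁ + T₂, ?_, by rw [Multiset.sum_add, hT₁sum, hT₂sum, pow_succ, mul_two]⟩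
    calc T₁ + T₂ ≤ T₁ + (S - T₁) := add_le_add_right hT₂ T₁
      _ = S := by rw [add_comm, hsplit]

theorem stmt_0 (m K : ℕ) (hK : K = 2 ^ m) (S : Multiset ℕ)
    (hpow : ∀ x ∈ S, (∃ a : ℕ, x = 2 ^ a) ∧ x ≤ K)
    (hcard : K ≤ Multiset.card S) :
    ∃ S' : Multiset ℕ, S' ≤ S ∧ S'.sum = K := by
  subst hK
  have hdvd : ∀ x ∈ S, x ∣ 2 ^ m := by
    intro x hx
    obtain ⟨⟨a, rfl⟩, hle⟩ := hpow x hx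
    exact Nat.pow_dvd_pow 2 ((Nat.pow_le_pow_iff_right one_lt_two).1 hle)
  have hpos : ∀ x ∈ S, 1 ≤ x := by
    intro x hx
    obtain ⟨⟨a, rfl⟩, -⟩ := hpow x hx
    exact Nat.one_le_two_pow
  have hcard_le_sum : Multiset.card S ≤ S.sum := by
    simpa using Multiset.card_nsmul_le_sum (s := S) (a := 1) hpos
  exact Multiset.exists_le_sum_eq_two_pow m S hdvd (hcard.trans hcard_le_sum)
end

section
/- Let K = 2^m and let S be a finite multiset of powers of 2, each at most K, such that no sub-multiset of S sums to exactly K. Then the total sum of S is at most K - 1, and in particular |S| ≤ K - 1. -/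
/-!
Greedy argument: if every part of `S` is a power of `b` dividing `T` and `S` sums to at least `T`,
take a largest part `x ≤ T`. Every other part is a smaller power of `b`, hence divides `x` and
therefore `T - x`, so we recurse on `T - x`. With `T = K = 2 ^ m` (every part `≤ K` divides `K`)
this shows that `S` sums to less than `K`, and the count follows since every part is at least `1`.
-/

lemma exists_le_sum_eq_of_pow_dvd {b : ℕ} (hb : 1 < b) (S : Multiset ℕ) (T : ℕ)
    (hS : ∀ x ∈ S, (∃ a : ℕ, x = b ^ a) ∧ x ∣ T) (hT : T ≤ S.sum) :
    ∃ S' ≤ S, S'.sum = T := by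
  induction S using Multiset.strongInductionOn generalizing T with
  | _ S ih =>
    rcases Nat.eq_zero_or_pos T with rfl | hTpos
    · exact ⟨0, Multiset.zero_le S, rfl⟩
    have hS0 : S ≠ 0 := by rintro rfl; simp at hT; omega
    obtain ⟨x, hxS, hxmax⟩ := Multiset.exists_max_image id hS0
    obtain ⟨⟨a, rfl⟩, hxT⟩ := hS _ hxS
    have hcons : b ^ a ::ₘ S.erase (b ^ a) = S := Multiset.cons_erase hxS
    have hrest : ∀ y ∈ S.erase (b ^ a), (∃ c : ℕ, y = b ^ c) ∧ y ∣ T - b ^ a := by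
      intro y hy
      have hyS := Multiset.mem_of_mem_erase hy
      obtain ⟨⟨c, rfl⟩, hyT⟩ := hS _ hyS
      have hca : c ≤ a := (Nat.pow_le_pow_iff_right hb).mp (hxmax _ hyS)
      exact ⟨⟨c, rfl⟩, Nat.dvd_sub hyT (pow_dvd_pow b hca)⟩
    have hsum : S.sum = b ^ a + (S.erase (b ^ a)).sum := by
      rw [← Multiset.sum_cons, hcons]
    obtain ⟨S', hS'le, hS'sum⟩ :=
      ih _ (Multiset.erase_lt.mpr hxS) (T - b ^ a) hrest (by omega)
    refine ⟨b ^ a ::ₘ S', hcons ▸ Multiset.cons_le_cons _ hS'le, ?_⟩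
    rw [Multiset.sum_cons, hS'sum, Nat.add_sub_cancel' (Nat.le_of_dvd hTpos hxT)]

theorem stmt_2 (m K : ℕ) (hK : K = 2 ^ m) (S : Multiset ℕ)
    (hpow : ∀ x ∈ S, (∃ a : ℕ, x = 2 ^ a) ∧ x ≤ K)
    (hno : ¬ ∃ S' : Multiset ℕ, S' ≤ S ∧ S'.sum = K) :
    S.sum ≤ K - 1 ∧ Multiset.card S ≤ K - 1 := by
  subst hK
  have hsum : S.sum < 2 ^ m := by
    by_contra! hle
    refine hno (exists_le_sum_eq_of_pow_dvd one_lt_two S _ (fun x hx => ?_) hle)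
    obtain ⟨⟨a, rfl⟩, hxK⟩ := hpow x hx
    exact ⟨⟨a, rfl⟩, pow_dvd_pow 2 ((Nat.pow_le_pow_iff_right one_lt_two).mp hxK)⟩
  have hcard : Multiset.card S ≤ S.sum := by
    simpa using Multiset.card_nsmul_le_sum (s := S) (a := 1) fun x hx => by
      obtain ⟨⟨a, rfl⟩, -⟩ := hpow x hx
      exact Nat.one_le_two_pow
  omega
end

section
/- Let 𝒜 be an algorithm for scheduling unit-size multi-server jobs on K servers, and OPT any feasible schedule of the same input. Suppose that for every slot t, either n(t) ≤ K − 1, or n(t) ≤ K − 1 + 2·n_OPT(t), where n(t) and n_OPT(t) are the numbers of remaining jobs with 𝒜 and OPT at slot t respectively. Suppose moreover that the number of slots in which 𝒜 has at least one remaining job is at most |𝒥|. Then F_𝒜 ≤ (K+1)·F_OPT. -/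
/-! Idle slots of `𝒜` contribute nothing and every busy slot contributes at most
`K - 1 + 2 n_OPT(t)`; as there are at most `|𝒥| ≤ F_OPT` busy slots,
`F_𝒜 ≤ (K - 1) F_OPT + 2 F_OPT = (K + 1) F_OPT`. -/

open Finset

theorem Finset.sum_le_card_filter_ne_zero_nsmul_add {ι M : Type*} [AddCommMonoid M]
    [DecidableEq M] [PartialOrder M] [CanonicallyOrderedAdd M] [IsOrderedAddMonoid M]
    (s : Finset ι) (f g : ι → M) (c : M) (h : ∀ t ∈ s, f t ≤ c + g t) :
    ∑ t ∈ s, f t ≤ #{t ∈ s | f t ≠ 0} • c + ∑ t ∈ s, g t := by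
  calc ∑ t ∈ s, f t = ∑ t ∈ s with f t ≠ 0, f t := (sum_filter_ne_zero s).symm
    _ ≤ ∑ t ∈ s with f t ≠ 0, (c + g t) :=
        sum_le_sum fun t ht => h t (mem_filter.mp ht).1
    _ = #{t ∈ s | f t ≠ 0} • c + ∑ t ∈ s with f t ≠ 0, g t := by
        rw [sum_add_distrib, sum_const]
    _ ≤ #{t ∈ s | f t ≠ 0} • c + ∑ t ∈ s, g t := by
        gcongr
        exact filter_subset _ _

theorem stmt_6 (K T N : ℕ) (hK : 1 ≤ K) (n nOPT : ℕ → ℕ)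
    (hslot : ∀ t ∈ Finset.range T, n t ≤ K - 1 ∨ n t ≤ K - 1 + 2 * nOPT t)
    (hbusy : ((Finset.range T).filter (fun t => 1 ≤ n t)).card ≤ N)
    (hN : N ≤ ∑ t ∈ Finset.range T, nOPT t) :
    ∑ t ∈ Finset.range T, n t ≤ (K + 1) * ∑ t ∈ Finset.range T, nOPT t := by
  set S := ∑ t ∈ range T, nOPT t
  simp only [Nat.one_le_iff_ne_zero] at hbusy
  have hslot' : ∀ t ∈ range T, n t ≤ (K - 1) + 2 * nOPT t := fun t ht =>
    (hslot t ht).elim (fun h => h.trans le_self_add) id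
  calc ∑ t ∈ range T, n t
      ≤ #{t ∈ range T | n t ≠ 0} • (K - 1) + ∑ t ∈ range T, 2 * nOPT t :=
        sum_le_card_filter_ne_zero_nsmul_add _ _ _ _ hslot'
    _ ≤ S * (K - 1) + 2 * S := by
        rw [smul_eq_mul, ← mul_sum]
        gcongr
        exact hbusy.trans hN
    _ = (K + 1) * S := by
        obtain ⟨k, rfl⟩ := Nat.exists_eq_add_of_le' hK
        simp only [Nat.add_sub_cancel]
        ring
end

section
/- Consider unit-size jobs on 2K servers scheduled by an algorithm that, in every slot t where the total outstanding volume Σ_{j ∈ R(t)} s_j is at least K, processes a set of jobs with total server requirement at least K (s_j ∈ {1,…,K} arbitrary), and in every slot where the outstanding volume is less than K, processes all remaining jobs. Then for every slot t, the cumulative volume processed by this algorithm through slot t is at least the cumulative volume processed by any feasible algorithm using only K servers. -/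
/-!
In a slot where the outstanding volume of the 2K-server algorithm is at least K, it processes
at least K, which is all any K-server algorithm can process, so the cumulative inequality is
carried over from the previous slot. In any other slot it clears everything that has arrived,
and no algorithm can have processed more than that.
-/

/-- Outstanding volume at the start of slot `t`: all arrivals through slot `t`
(arrivals counted at start of slot) minus everything processed in slots before `t`. -/
def outstanding (arr p : ℕ → ℤ) (t : ℕ) : ℤ :=
  ∑ s ∈ Finset.range (t + 1), arr s - ∑ s ∈ Finset.range t, p s

open Finset

theorem sum_range_succ_le_of_le_or_sum_le {α : Type*} [AddCommMonoid α] [PartialOrder α]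
    [IsOrderedAddMonoid α] {f g : ℕ → α}
    (h : ∀ t, g t ≤ f t ∨ ∑ s ∈ range (t + 1), g s ≤ ∑ s ∈ range (t + 1), f s) (t : ℕ) :
    ∑ s ∈ range (t + 1), g s ≤ ∑ s ∈ range (t + 1), f s := by
  induction t with
  | zero => simpa using h 0
  | succ t ih =>
    rcases h (t + 1) with hstep | hsum
    · rw [sum_range_succ g (t + 1), sum_range_succ f (t + 1)]
      exact add_le_add ih hstep
    · exact hsum

section outstanding

variable {arr p : ℕ → ℤ} {t : ℕ}

theorem sum_range_succ_le_of_le_outstanding (h : p t ≤ outstanding arr p t) :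
    ∑ s ∈ range (t + 1), p s ≤ ∑ s ∈ range (t + 1), arr s := by
  rw [outstanding] at h
  rw [sum_range_succ]
  linarith

theorem sum_range_succ_eq_of_eq_outstanding (h : p t = outstanding arr p t) :
    ∑ s ∈ range (t + 1), p s = ∑ s ∈ range (t + 1), arr s := by
  rw [outstanding] at h
  rw [sum_range_succ]
  linarith

end outstanding

theorem stmt_12_general (K : ℤ) (arr pA pO : ℕ → ℤ)
    (hpOfeas : ∀ t, pO t ≤ outstanding arr pO t)
    (hpOcap : ∀ t, pO t ≤ K)
    (hAfull : ∀ t, K ≤ outstanding arr pA t → K ≤ pA t)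
    (hAall : ∀ t, outstanding arr pA t < K → pA t = outstanding arr pA t) :
    ∀ t : ℕ, ∑ s ∈ Finset.range (t + 1), pO s ≤ ∑ s ∈ Finset.range (t + 1), pA s := by
  refine sum_range_succ_le_of_le_or_sum_le fun t => ?_
  by_cases hK : K ≤ outstanding arr pA t
  · exact Or.inl ((hpOcap t).trans (hAfull t hK))
  · right
    rw [sum_range_succ_eq_of_eq_outstanding (hAall t (not_le.mp hK))]
    exact sum_range_succ_le_of_le_outstanding (hpOfeas t)

theorem stmt_12 (K : ℤ) (arr pA pO : ℕ → ℤ)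
    (harr : ∀ t, 0 ≤ arr t)
    (hpOpos : ∀ t, 0 ≤ pO t)
    (hpAfeas : ∀ t, pA t ≤ outstanding arr pA t)
    (hpOfeas : ∀ t, pO t ≤ outstanding arr pO t)
    (hpOcap : ∀ t, pO t ≤ K)
    (hAfull : ∀ t, K ≤ outstanding arr pA t → K ≤ pA t)
    (hAall : ∀ t, outstanding arr pA t < K → pA t = outstanding arr pA t) :
    ∀ t : ℕ, ∑ s ∈ Finset.range (t + 1), pO s ≤ ∑ s ∈ Finset.range (t + 1), pA s :=
  stmt_12_general K arr pA pO hpOfeas hpOcap hAfull hAall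
end

section
/- Consider the input where, for ℓ = 0,…,L₁−1, one job with s = K and two jobs with s = K/4 arrive at slot 2ℓ+1, and two jobs with s = K/4 arrive at slot 2ℓ+2; then, for n = 0,…,L₂−1, two jobs with s = K/2 arrive at slot 2L₁+n. All jobs have unit size. Then there exists a feasible schedule on K servers with total flow time at most 4L₁ + 2L₂. -/
/-!
Run each job of need `K` in its arrival slot `2ℓ+1`, the four jobs of need `K/4` arriving in
slots `2ℓ+1` and `2ℓ+2` together in slot `2ℓ+2`, and each pair of jobs of need `K/2` one slot
after its arrival slot `2L₁+n` (slot `2L₁` is still occupied when `L₁ > 0`). Every slot then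
serves a single one of these groups, of total need at most `K`, and the delays add up to
`2` per `ℓ` and `2` per `n`.
-/

/-- Job set for the Greedy lower-bound input: for each `ℓ < L₁` there are five jobs
(one with need `K`, two with need `K/4` arriving at slot `2ℓ+1`, two with need `K/4`
arriving at slot `2ℓ+2`), and for each `n < L₂` two jobs with need `K/2`
arriving at slot `2L₁+n`. -/
def greedyJob (L₁ L₂ : ℕ) : Type := (Fin L₁ × Fin 5) ⊕ (Fin L₂ × Fin 2)

instance (L₁ L₂ : ℕ) : Fintype (greedyJob L₁ L₂) := by unfold greedyJob; infer_instance
instance (L₁ L₂ : ℕ) : DecidableEq (greedyJob L₁ L₂) := by unfold greedyJob; infer_instance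

/-- Arrival slot of each job. -/
def greedyArr (L₁ L₂ : ℕ) : greedyJob L₁ L₂ → ℕ :=
  Sum.elim (fun p => if (p.2 : ℕ) < 3 then 2 * (p.1 : ℕ) + 1 else 2 * (p.1 : ℕ) + 2)
    (fun q => 2 * L₁ + (q.1 : ℕ))

/-- Server need of each job. -/
def greedyNeed (K L₁ L₂ : ℕ) : greedyJob L₁ L₂ → ℕ :=
  Sum.elim (fun p => if (p.2 : ℕ) = 0 then K else K / 4) (fun _ => K / 2)

open Finset

variable {L₁ L₂ : ℕ}

lemma sum_greedyJob {M : Type*} [AddCommMonoid M] (f : greedyJob L₁ L₂ → M) :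
    ∑ j, f j = ∑ ℓ, ∑ i : Fin 5, f (.inl (ℓ, i)) + ∑ n, ∑ i : Fin 2, f (.inr (n, i)) := by
  rw [← Fintype.sum_prod_type', ← Fintype.sum_prod_type']
  exact Fintype.sum_sum_type f

lemma sum_ite_le_of_unique {α : Type*} (s : Finset α) (p : α → Prop) [DecidablePred p] (c : ℕ)
    (h : ∀ a ∈ s, ∀ b ∈ s, p a → p b → a = b) :
    ∑ x ∈ s, (if p x then c else 0) ≤ c := by
  rw [← sum_filter, sum_const, smul_eq_mul]
  have hcard : #(s.filter p) ≤ 1 :=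
    card_le_one.mpr fun a ha b hb => h a (mem_filter.1 ha).1 b (mem_filter.1 hb).1
      (mem_filter.1 ha).2 (mem_filter.1 hb).2
  simpa using Nat.mul_le_mul_right c hcard

def greedySchedule (L₁ L₂ : ℕ) : greedyJob L₁ L₂ → ℕ :=
  Sum.elim (fun p => if (p.2 : ℕ) = 0 then 2 * (p.1 : ℕ) + 1 else 2 * (p.1 : ℕ) + 2)
    (fun q => 2 * L₁ + (q.1 : ℕ) + 1)

lemma greedyArr_le_greedySchedule (j : greedyJob L₁ L₂) :
    greedyArr L₁ L₂ j ≤ greedySchedule L₁ L₂ j := by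
  rcases j with ⟨ℓ, i⟩ | ⟨n, i⟩
  · simp only [greedyArr, greedySchedule, Sum.elim_inl]
    split_ifs <;> omega
  · simp only [greedyArr, greedySchedule, Sum.elim_inr]
    omega

lemma sum_greedySchedule_sub_greedyArr :
    ∑ j, (greedySchedule L₁ L₂ j - greedyArr L₁ L₂ j) = 2 * L₁ + 2 * L₂ := by
  simp [sum_greedyJob, greedySchedule, greedyArr, Fin.sum_univ_five, mul_comm]

lemma load_greedySchedule_inl_le (m : ℕ) (ℓ : Fin L₁) (t : ℕ) :
    ∑ i : Fin 5, (if greedySchedule L₁ L₂ (.inl (ℓ, i)) = t then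
      greedyNeed (4 * m) L₁ L₂ (.inl (ℓ, i)) else 0)
      ≤ if 2 * (ℓ : ℕ) + 1 = t ∨ 2 * (ℓ : ℕ) + 2 = t then 4 * m else 0 := by
  simp only [Fin.sum_univ_five, greedySchedule, greedyNeed, Sum.elim_inl, Fin.isValue,
    Fin.coe_ofNat_eq_mod, Nat.reduceMod, Nat.reduceEqDiff, ↓reduceIte]
  split_ifs <;> omega

lemma load_greedySchedule_inr_le (m : ℕ) (n : Fin L₂) (t : ℕ) :
    ∑ i : Fin 2, (if greedySchedule L₁ L₂ (.inr (n, i)) = t then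
      greedyNeed (4 * m) L₁ L₂ (.inr (n, i)) else 0)
      ≤ if 2 * L₁ + n + 1 = t then 4 * m else 0 := by
  by_cases ht : 2 * L₁ + n + 1 = t <;> simp [greedySchedule, greedyNeed, ht]
  omega

lemma load_greedySchedule_le (m t : ℕ) :
    ∑ j ∈ univ.filter (fun j => greedySchedule L₁ L₂ j = t), greedyNeed (4 * m) L₁ L₂ j
      ≤ 4 * m := by
  rw [sum_filter, sum_greedyJob]
  refine (add_le_add (sum_le_sum fun ℓ _ => load_greedySchedule_inl_le m ℓ t)
    (sum_le_sum fun n _ => load_greedySchedule_inr_le m n t)).trans ?_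
  rcases le_or_gt t (2 * L₁) with ht | ht
  · rw [sum_eq_zero (s := univ (α := Fin L₂)) fun n _ => if_neg (by omega), add_zero]
    exact sum_ite_le_of_unique _ _ _ fun a _ b _ ha hb => Fin.ext (by omega)
  · rw [sum_eq_zero (s := univ (α := Fin L₁)) fun ℓ _ => if_neg (by omega), zero_add]
    exact sum_ite_le_of_unique _ _ _ fun a _ b _ ha hb => Fin.ext (by omega)

theorem stmt_14 (K L₁ L₂ : ℕ) (hK : 4 ∣ K) :
    ∃ d : greedyJob L₁ L₂ → ℕ,
      (∀ j, greedyArr L₁ L₂ j ≤ d j) ∧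
      (∀ t : ℕ, ∑ j ∈ Finset.univ.filter (fun j => d j = t), greedyNeed K L₁ L₂ j ≤ K) ∧
      ∑ j, (d j - greedyArr L₁ L₂ j) ≤ 4 * L₁ + 2 * L₂ := by
  obtain ⟨m, rfl⟩ := hK
  refine ⟨greedySchedule L₁ L₂, greedyArr_le_greedySchedule, load_greedySchedule_le m, ?_⟩
  rw [sum_greedySchedule_sub_greedyArr]
  omega
end

section
/- Consider the input where K/2 unit-size jobs with s = 1 arrive at slot 1 and one unit-size job with s = K arrives at each slot 1,…,T. Any algorithm that in every slot 1,…,T processes the s=K job arriving in that slot has total flow time at least K·T/2, while there exists a feasible schedule with total flow time at most K/2 + 2T + 1. Hence for T ≥ K², the ratio of the two flow times is at least K/5. -/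
/-- Job set for the ServerFilling lower-bound input: `K/2` unit-need jobs arriving at
slot `1`, and `T` jobs with need `K`, the `t`-th arriving at slot `t+1` (slots `1,…,T`). -/
def sfJob (K T : ℕ) : Type := Fin (K / 2) ⊕ Fin T

instance (K T : ℕ) : Fintype (sfJob K T) := by unfold sfJob; infer_instance
instance (K T : ℕ) : DecidableEq (sfJob K T) := by unfold sfJob; infer_instance

/-- Arrival slot of each job. -/
def sfArr (K T : ℕ) : sfJob K T → ℕ :=
  Sum.elim (fun _ => 1) (fun t => (t : ℕ) + 1)

/-- Server need of each job. -/
def sfNeed (K T : ℕ) : sfJob K T → ℕ :=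
  Sum.elim (fun _ => 1) (fun _ => K)

/-!
While the need-`K` jobs are served at arrival, each of the slots `1,…,T` is full, so every
unit-need job waits until slot `T + 1` and the `K/2` of them incur flow time at least `T` each.
Serving the unit-need jobs first and shifting each need-`K` job by one slot costs only
`K/2 + 2T`. For `K = 2m` and `T ≥ 4m² ≥ 2m + 2` the ratio `mT / (m + 2T + 1)` is at least `2m/5`.
-/

open Finset Function

section Capacity

variable {ι : Type*} [Fintype ι] [DecidableEq ι] {need : ι → ℕ} {d : ι → ℕ} {K : ℕ}

theorem need_add_need_le_of_slot_eq
    (hcap : ∀ t : ℕ, ∑ j ∈ univ.filter (fun j => d j = t), need j ≤ K)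
    {i j : ι} (hij : i ≠ j) (hslot : d i = d j) : need i + need j ≤ K := by
  have hsub : {i, j} ⊆ univ.filter (fun x => d x = d i) := by
    intro x hx
    rcases mem_insert.mp hx with rfl | hx
    · simp
    · simp [mem_singleton.mp hx, hslot]
  calc need i + need j = ∑ x ∈ {i, j}, need x := (sum_pair hij).symm
    _ ≤ ∑ x ∈ univ.filter (fun x => d x = d i), need x := sum_le_sum_of_subset hsub
    _ ≤ K := hcap (d i)

end Capacity

theorem sum_ite_eq_le_of_injective {α : Type*} [Fintype α] {f : α → ℕ} (hf : Injective f)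
    (t c : ℕ) : ∑ a, (if f a = t then c else 0) ≤ c := by
  have hcard : #(univ.filter (fun a => f a = t)) ≤ 1 :=
    card_le_one.mpr fun a ha b hb => hf <| by
      rw [(mem_filter.mp ha).2, (mem_filter.mp hb).2]
  calc ∑ a, (if f a = t then c else 0) = #(univ.filter (fun a => f a = t)) * c := by
        rw [← sum_filter, sum_const, smul_eq_mul]
    _ ≤ 1 * c := Nat.mul_le_mul_right c hcard
    _ = c := one_mul c

section ServerFilling

variable {K T : ℕ}

theorem sfJob_sum (f : sfJob K T → ℕ) :
    ∑ j, f j = ∑ i : Fin (K / 2), f (Sum.inl i) + ∑ t : Fin T, f (Sum.inr t) :=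
  Fintype.sum_sum_type f

theorem sf_T_lt_unit_departure {d : sfJob K T → ℕ} (harr : ∀ j, sfArr K T j ≤ d j)
    (hcap : ∀ t : ℕ, ∑ j ∈ univ.filter (fun j => d j = t), sfNeed K T j ≤ K)
    (hbig : ∀ t : Fin T, d (Sum.inr t) = (t : ℕ) + 1) (i : Fin (K / 2)) :
    T < d (Sum.inl i) := by
  by_contra! hle
  have hpos : 1 ≤ d (Sum.inl i) := harr (Sum.inl i)
  -- the need-`K` job arriving in slot `d (inl i)` is served alongside the unit job
  let t : Fin T := ⟨d (Sum.inl i) - 1, by omega⟩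
  have hslot : d (Sum.inl i) = d (Sum.inr t) := by
    rw [hbig t]; exact (Nat.sub_add_cancel hpos).symm
  have := need_add_need_le_of_slot_eq hcap Sum.inl_ne_inr hslot
  simp only [sfNeed, Sum.elim_inl, Sum.elim_inr] at this
  omega

theorem sf_flowTime_ge {d : sfJob K T → ℕ} (harr : ∀ j, sfArr K T j ≤ d j)
    (hcap : ∀ t : ℕ, ∑ j ∈ univ.filter (fun j => d j = t), sfNeed K T j ≤ K)
    (hbig : ∀ t : Fin T, d (Sum.inr t) = (t : ℕ) + 1) :
    K / 2 * T ≤ ∑ j, (d j - sfArr K T j + 1) := by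
  rw [sfJob_sum]
  calc K / 2 * T = ∑ _i : Fin (K / 2), T := by simp [mul_comm]
    _ ≤ ∑ i : Fin (K / 2), (d (Sum.inl i) - sfArr K T (Sum.inl i) + 1) := by
        gcongr with i
        have := sf_T_lt_unit_departure harr hcap hbig i
        simp only [sfArr, Sum.elim_inl]
        omega
    _ ≤ _ := Nat.le_add_right _ _

variable (K T) in
def sfAltSchedule : sfJob K T → ℕ :=
  Sum.elim (fun _ => 1) (fun t => (t : ℕ) + 2)

theorem sfArr_le_sfAltSchedule (j : sfJob K T) : sfArr K T j ≤ sfAltSchedule K T j := by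
  rcases j with i | t <;> simp [sfArr, sfAltSchedule]

theorem sfAltSchedule_load_le (t : ℕ) :
    ∑ j ∈ univ.filter (fun j => sfAltSchedule K T j = t), sfNeed K T j ≤ K := by
  rw [sum_filter, sfJob_sum]
  simp only [sfAltSchedule, sfNeed, Sum.elim_inl, Sum.elim_inr]
  by_cases ht : 1 = t
  · have hnone : ∀ s : Fin T, (s : ℕ) + 2 ≠ t := fun s => by omega
    subst ht
    simpa [hnone] using Nat.div_le_self K 2
  · simp only [ht, if_false, sum_const_zero, zero_add]
    exact sum_ite_eq_le_of_injective (f := fun s : Fin T => (s : ℕ) + 2)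
      (fun a b h => Fin.ext (by simpa using h)) t K

theorem sfAltSchedule_flowTime :
    ∑ j, (sfAltSchedule K T j - sfArr K T j + 1) = K / 2 + 2 * T := by
  simp [sfJob_sum, sfAltSchedule, sfArr, mul_comm]

end ServerFilling

theorem two_mul_mul_le_five_mul (m T : ℕ) (hT : (2 * m) ^ 2 ≤ T) :
    2 * m * (m + 2 * T + 1) ≤ 5 * (m * T) := by
  rcases Nat.eq_zero_or_pos m with rfl | hm
  · simp
  have h : 2 * m + 2 ≤ T := by nlinarith
  calc 2 * m * (m + 2 * T + 1) = m * (2 * m + 2 + 4 * T) := by ring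
    _ ≤ m * (T + 4 * T) := by gcongr
    _ = 5 * (m * T) := by ring

theorem stmt_15_general (K T : ℕ) (hKeven : 2 ∣ K) :
    -- any feasible schedule processing each need-`K` job in its arrival slot has
    -- total flow time at least (K/2)·T
    (∀ d : sfJob K T → ℕ,
        (∀ j, sfArr K T j ≤ d j) →
        (∀ t : ℕ, ∑ j ∈ Finset.univ.filter (fun j => d j = t), sfNeed K T j ≤ K) →
        (∀ t : Fin T, d (Sum.inr t) = (t : ℕ) + 1) →
        K / 2 * T ≤ ∑ j, (d j - sfArr K T j + 1)) ∧
    -- there is a feasible schedule with total flow time at most K/2 + 2T + 1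
    (∃ d : sfJob K T → ℕ,
        (∀ j, sfArr K T j ≤ d j) ∧
        (∀ t : ℕ, ∑ j ∈ Finset.univ.filter (fun j => d j = t), sfNeed K T j ≤ K) ∧
        ∑ j, (d j - sfArr K T j + 1) ≤ K / 2 + 2 * T + 1) ∧
    -- hence for T ≥ K² the ratio of the two flow times is at least K/5
    (K ^ 2 ≤ T → K * (K / 2 + 2 * T + 1) ≤ 5 * (K / 2 * T)) := by
  refine ⟨fun d => sf_flowTime_ge,
    ⟨sfAltSchedule K T, sfArr_le_sfAltSchedule, sfAltSchedule_load_le,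
      sfAltSchedule_flowTime.trans_le (Nat.le_succ _)⟩, fun hT => ?_⟩
  obtain ⟨m, rfl⟩ := hKeven
  rw [Nat.mul_div_cancel_left m two_pos]
  exact two_mul_mul_le_five_mul m T hT

theorem stmt_15 (K T : ℕ) (hK2 : 2 ≤ K) (hKeven : 2 ∣ K) :
    -- any feasible schedule processing each need-`K` job in its arrival slot has
    -- total flow time at least (K/2)·T
    (∀ d : sfJob K T → ℕ,
        (∀ j, sfArr K T j ≤ d j) →
        (∀ t : ℕ, ∑ j ∈ Finset.univ.filter (fun j => d j = t), sfNeed K T j ≤ K) →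
        (∀ t : Fin T, d (Sum.inr t) = (t : ℕ) + 1) →
        K / 2 * T ≤ ∑ j, (d j - sfArr K T j + 1)) ∧
    -- there is a feasible schedule with total flow time at most K/2 + 2T + 1
    (∃ d : sfJob K T → ℕ,
        (∀ j, sfArr K T j ≤ d j) ∧
        (∀ t : ℕ, ∑ j ∈ Finset.univ.filter (fun j => d j = t), sfNeed K T j ≤ K) ∧
        ∑ j, (d j - sfArr K T j + 1) ≤ K / 2 + 2 * T + 1) ∧
    -- hence for T ≥ K² the ratio of the two flow times is at least K/5
    (K ^ 2 ≤ T → K * (K / 2 + 2 * T + 1) ≤ 5 * (K / 2 * T)) :=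
  stmt_15_general K T hKeven
end

section
/- Let (ΔW_{≤a}) be partial sums of a sequence ΔW_a of reals satisfying ΔW_{≤a} ≤ (K−1)·2^{a+1} for all a, and let W^OPT_a ≥ 0 with n^OPT_a ≥ W^OPT_a/2^{a+1}, and −ΔW_{≤a₁−1} ≤ W^OPT_{≤a₁−1} where W^OPT_{≤a₁−1} ≤ 2^{a₁}·2·n^OPT_{≤a₁−1}. Then for any 0 ≤ a₁ ≤ a₂: Σ_{a=a₁}^{a₂} (ΔW_a + W^OPT_a)/2^a ≤ (a₂ − a₁ + 2)·(K−1) + 2·n^OPT_{≤a₂}, where n^OPT_{≤a₂} = Σ_{a ≤ a₂} n^OPT_a. -/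
/-!
Write `dW a = dWle a - dWle (a - 1)` and sum by parts against the weights `2⁻ᵃ`: the sum of
`dW a / 2 ^ a` becomes the boundary terms `dWle a₂ / 2 ^ a₂ - dWle (a₁ - 1) / 2 ^ a₁` plus the
interior terms `dWle a / 2 ^ (a + 1)`, `a₁ ≤ a < a₂`. Each interior term is at most `K - 1` and
the upper boundary term at most `2 (K - 1)`, which gives the coefficient `a₂ - a₁ + 2`; the
lower boundary term is controlled by `2 noptle (a₁ - 1)`, and `Wopt a / 2 ^ a ≤ 2 nopt a`
telescopes the rest to `2 (noptle a₂ - noptle (a₁ - 1))`.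
-/

open Finset

theorem Finset.sum_Icc_sub_mul_eq {R : Type*} [CommRing R] (D w : ℤ → R) {a₁ a₂ : ℤ}
    (h : a₁ ≤ a₂) :
    ∑ a ∈ Icc a₁ a₂, (D a - D (a - 1)) * w a =
      D a₂ * w a₂ - D (a₁ - 1) * w a₁ + ∑ a ∈ Ico a₁ a₂, D a * (w a - w (a + 1)) := by
  induction a₂, h using Int.leInduction with
  | base => simp only [Icc_self, sum_singleton, Ico_self, sum_empty]; ring
  | succ n hn ih =>
    rw [← insert_Icc_right_eq_Icc_add_one (by omega), sum_insert (by simp), ih,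
      ← insert_Ico_right_eq_Ico_add_one hn, sum_insert (by simp), add_sub_cancel_right]
    ring

theorem Finset.sum_Icc_sub_eq {R : Type*} [CommRing R] (D : ℤ → R) {a₁ a₂ : ℤ}
    (h : a₁ ≤ a₂) : ∑ a ∈ Icc a₁ a₂, (D a - D (a - 1)) = D a₂ - D (a₁ - 1) := by
  simpa using sum_Icc_sub_mul_eq D 1 h

theorem Finset.sum_Ico_le_mul {R : Type*} [Ring R] [PartialOrder R] [IsOrderedRing R]
    {f : ℤ → R} {c : R} {a₁ a₂ : ℤ} (h : a₁ ≤ a₂)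
    (hf : ∀ a, f a ≤ c) : ∑ a ∈ Ico a₁ a₂, f a ≤ (a₂ - a₁) * c := by
  have := sum_le_card_nsmul (Ico a₁ a₂) f c fun a _ => hf a
  rwa [nsmul_eq_mul, Int.card_Ico, ← Int.cast_natCast, Int.toNat_of_nonneg (by omega),
    Int.cast_sub] at this

theorem inv_zpow_two_sub_inv_zpow_two_add_one (a : ℤ) :
    ((2 : ℝ) ^ a)⁻¹ - (2 ^ (a + 1))⁻¹ = (2 ^ (a + 1))⁻¹ := by
  rw [zpow_add_one₀ two_ne_zero]; field_simp; ring

theorem div_zpow_le_two_mul {x c : ℝ} {a : ℤ} (h : x / 2 ^ (a + 1) ≤ c) :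
    x / 2 ^ a ≤ 2 * c := by
  rw [zpow_add_one₀ two_ne_zero, ← div_div, div_le_iff₀ two_pos] at h
  linarith

theorem stmt_19_general (K : ℝ) (a₁ a₂ : ℤ) (ha : a₁ ≤ a₂)
    (dW Wopt nopt dWle Woptle noptle : ℤ → ℝ)
    (hdWle : ∀ a : ℤ, dWle a = dWle (a - 1) + dW a)
    (hnoptle : ∀ a : ℤ, noptle a = noptle (a - 1) + nopt a)
    (hbound : ∀ a : ℤ, dWle a ≤ (K - 1) * 2 ^ (a + 1))
    (hn : ∀ a : ℤ, Wopt a / 2 ^ (a + 1) ≤ nopt a)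
    (hneg : -dWle (a₁ - 1) ≤ Woptle (a₁ - 1))
    (hWle : Woptle (a₁ - 1) ≤ 2 ^ a₁ * (2 * noptle (a₁ - 1))) :
    ∑ a ∈ Finset.Icc a₁ a₂, (dW a + Wopt a) / 2 ^ a ≤
      ((a₂ - a₁ + 2 : ℤ) : ℝ) * (K - 1) + 2 * noptle a₂ := by
  have hbound' (a : ℤ) : dWle a / 2 ^ (a + 1) ≤ K - 1 :=
    (div_le_iff₀ (zpow_pos two_pos _)).2 (hbound a)
  have hsplit : ∑ a ∈ Icc a₁ a₂, (dW a + Wopt a) / 2 ^ a =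
      ∑ a ∈ Icc a₁ a₂, (dWle a - dWle (a - 1)) * (2 ^ a)⁻¹ +
        ∑ a ∈ Icc a₁ a₂, Wopt a / 2 ^ a := by
    rw [← sum_add_distrib]
    refine sum_congr rfl fun a _ => ?_
    rw [hdWle a]; ring
  have hmiddle :
      ∑ a ∈ Ico a₁ a₂, dWle a * ((2 ^ a)⁻¹ - (2 ^ (a + 1))⁻¹) ≤ (a₂ - a₁) * (K - 1) :=
    sum_Ico_le_mul ha fun a => by
      rw [inv_zpow_two_sub_inv_zpow_two_add_one, ← div_eq_mul_inv]; exact hbound' a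
  have htop : dWle a₂ * (2 ^ a₂)⁻¹ ≤ 2 * (K - 1) := div_zpow_le_two_mul (hbound' a₂)
  have hbottom : -(dWle (a₁ - 1) * (2 ^ a₁)⁻¹) ≤ 2 * noptle (a₁ - 1) := by
    rw [← neg_mul, ← div_eq_mul_inv, div_le_iff₀ (zpow_pos two_pos _)]
    linarith
  have hWopt : ∑ a ∈ Icc a₁ a₂, Wopt a / 2 ^ a ≤ 2 * (noptle a₂ - noptle (a₁ - 1)) := by
    rw [← sum_Icc_sub_eq noptle ha, mul_sum]
    refine sum_le_sum fun a _ => ?_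
    rw [hnoptle a, add_sub_cancel_left]
    exact div_zpow_le_two_mul (hn a)
  rw [hsplit, sum_Icc_sub_mul_eq _ _ ha]
  push_cast
  linarith

theorem stmt_19 (K : ℝ) (a₁ a₂ : ℤ) (ha₁ : 0 ≤ a₁) (ha : a₁ ≤ a₂)
    (dW Wopt nopt dWle Woptle noptle : ℤ → ℝ)
    (hdWle : ∀ a : ℤ, dWle a = dWle (a - 1) + dW a)
    (hWoptle : ∀ a : ℤ, Woptle a = Woptle (a - 1) + Wopt a)
    (hnoptle : ∀ a : ℤ, noptle a = noptle (a - 1) + nopt a)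
    (hbound : ∀ a : ℤ, dWle a ≤ (K - 1) * 2 ^ (a + 1))
    (hWpos : ∀ a : ℤ, 0 ≤ Wopt a)
    (hn : ∀ a : ℤ, Wopt a / 2 ^ (a + 1) ≤ nopt a)
    (hnpos : ∀ a : ℤ, 0 ≤ nopt a)
    (hneg : -dWle (a₁ - 1) ≤ Woptle (a₁ - 1))
    (hWle : Woptle (a₁ - 1) ≤ 2 ^ a₁ * (2 * noptle (a₁ - 1))) :
    ∑ a ∈ Finset.Icc a₁ a₂, (dW a + Wopt a) / 2 ^ a ≤
      ((a₂ - a₁ + 2 : ℤ) : ℝ) * (K - 1) + 2 * noptle a₂ :=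
  stmt_19_general K a₁ a₂ ha dW Wopt nopt dWle Woptle noptle hdWle hnoptle hbound hn hneg hWle
end
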